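/- Let a₁, a₂ be integers with 2 ≤ a₁ < a₂, and set Ω(a₁,a₂) := H(a₁,a₂)⁻¹ · G(a₁ - 2) in the Artin braid group B_{a₂}. Then: if a₁ is odd, Ω(a₁,a₂)⁻¹ · e(a₁)·o(a₁) · Ω(a₁,a₂) = W(a₁); and if a₁ is even, Ω(a₁,a₂)⁻¹ · o(a₁)·e(a₁) · Ω(a₁,a₂) = W(a₁). -/

import Mathlib

/-- The braid relations for the Artin braid group `B_n`, as a set of elements
of the free group on generators `σ_1, …, σ_{n-1}` (indexed by `Fin (n-1)`,
where the index `i : Fin (n-1)` corresponds to the generator `σ_{i+1}`). -/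
def braidRels (n : ℕ) : Set (FreeGroup (Fin (n - 1))) :=
  {r | ∃ i j : Fin (n - 1), (j : ℕ) = (i : ℕ) + 1 ∧
      r = FreeGroup.of i * FreeGroup.of j * FreeGroup.of i *
          (FreeGroup.of j * FreeGroup.of i * FreeGroup.of j)⁻¹} ∪
  {r | ∃ i j : Fin (n - 1), (i : ℕ) + 2 ≤ (j : ℕ) ∧
      r = FreeGroup.of i * FreeGroup.of j * (FreeGroup.of j * FreeGroup.of i)⁻¹}

/-- The Artin braid group `B_n`. -/
abbrev BraidGroup (n : ℕ) := PresentedGroup (braidRels n)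

/-- The generator `σ_i` of `B_n`, for `1 ≤ i ≤ n - 1` (junk value `1` otherwise). -/
def σ (n i : ℕ) : BraidGroup n :=
  if h : 1 ≤ i ∧ i ≤ n - 1 then PresentedGroup.of (⟨i - 1, by omega⟩ : Fin (n - 1)) else 1

/-- `W n m` is the element `W(m) = σ_{m-1} σ_{m-2} ⋯ σ_1` of `B_n`, with `W(1) = 1`. -/
def W (n : ℕ) : ℕ → BraidGroup n
  | 0 => 1
  | m + 1 => σ n m * W n m

/-- `eB m k` is the product `e(k)` of the generators `σ_i` of `B_m` over even `i`
with `2 ≤ i < k` (the factors commute, so the order is irrelevant; note `σ m 0 = 1`). -/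
def eB (m k : ℕ) : BraidGroup m :=
  (((List.range k).filter (fun i => i % 2 = 0)).map (σ m)).prod

/-- `oB m k` is the product `o(k)` of the generators `σ_i` of `B_m` over odd `i`
with `1 ≤ i < k` (the factors commute, so the order is irrelevant). -/
def oB (m k : ℕ) : BraidGroup m :=
  (((List.range k).filter (fun i => i % 2 = 1)).map (σ m)).prod

/-- The elements `G(k)` of `B_m`: `G(0) = G(1) = 1`, and for `k ≥ 2`,
`G(k) = e(k+1) o(k) G(k-2)` if `k` is odd, `G(k) = o(k+1) e(k) G(k-2)` if `k` is even. -/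
def G (m : ℕ) : ℕ → BraidGroup m
  | 0 => 1
  | 1 => 1
  | k + 2 => if (k + 2) % 2 = 1 then eB m (k + 3) * oB m (k + 2) * G m k
             else oB m (k + 3) * eB m (k + 2) * G m k


/-!
`G(k)` conjugates `e(k+2) o(k+2)` (for odd `k`; `o(k+2) e(k+2)` for even `k`) into `W(k+2)`.
Passing from `k` to `k + 2` adds `σ_{k+3} σ_{k+2}` on both sides, and these two generators
commute with `G(k)`, which involves only `σ_i` with `i ≤ k`; so only the far commutation
relations are needed. The factor `H = ρ(G(a₂ - a₁ - 1))` of `Ω` is a product of generators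
`σ_j` with `j > a₁`, hence commutes with the conjugated product and drops out.
-/

lemma σ_zero (m : ℕ) : σ m 0 = 1 := by
  simp [σ]

lemma σ_commute (m : ℕ) {i j : ℕ} (hij : i + 2 ≤ j) : Commute (σ m i) (σ m j) := by
  unfold σ
  split_ifs with hi hj hj
  · exact PresentedGroup.mk_eq_mk_of_mul_inv_mem <|
      Or.inr ⟨⟨i - 1, by omega⟩, ⟨j - 1, by omega⟩, by simp only; omega, rfl⟩
  all_goals simp

lemma eB_succ_of_even {m n : ℕ} (h : n % 2 = 0) : eB m (n + 1) = eB m n * σ m n := by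
  simp [eB, List.range_succ, h]

lemma eB_succ_of_odd {m n : ℕ} (h : n % 2 = 1) : eB m (n + 1) = eB m n := by
  simp [eB, List.range_succ, h]

lemma oB_succ_of_odd {m n : ℕ} (h : n % 2 = 1) : oB m (n + 1) = oB m n * σ m n := by
  simp [oB, List.range_succ, h]

lemma oB_succ_of_even {m n : ℕ} (h : n % 2 = 0) : oB m (n + 1) = oB m n := by
  simp [oB, List.range_succ, h]

def sigmaClosure (m k : ℕ) : Submonoid (BraidGroup m) :=
  Submonoid.closure (σ m '' Set.Iio k)

lemma σ_mem_sigmaClosure {m k i : ℕ} (h : i < k) : σ m i ∈ sigmaClosure m k :=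
  Submonoid.subset_closure ⟨i, h, rfl⟩

lemma sigmaClosure_mono (m : ℕ) {k l : ℕ} (h : k ≤ l) : sigmaClosure m k ≤ sigmaClosure m l :=
  Submonoid.closure_mono (Set.image_mono (Set.Iio_subset_Iio h))

lemma eB_mem_sigmaClosure (m k : ℕ) : eB m k ∈ sigmaClosure m k := by
  refine Submonoid.list_prod_mem _ fun x hx => ?_
  obtain ⟨i, hi, rfl⟩ := List.mem_map.mp hx
  exact σ_mem_sigmaClosure (List.mem_range.mp (List.mem_filter.mp hi).1)

lemma oB_mem_sigmaClosure (m k : ℕ) : oB m k ∈ sigmaClosure m k := by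
  refine Submonoid.list_prod_mem _ fun x hx => ?_
  obtain ⟨i, hi, rfl⟩ := List.mem_map.mp hx
  exact σ_mem_sigmaClosure (List.mem_range.mp (List.mem_filter.mp hi).1)

lemma G_mem_sigmaClosure (m : ℕ) : ∀ k, G m k ∈ sigmaClosure m (k + 1)
  | 0 | 1 => one_mem _
  | k + 2 => by
    have hG := sigmaClosure_mono m (show k + 1 ≤ k + 3 by omega) (G_mem_sigmaClosure m k)
    have hle := sigmaClosure_mono m (show k + 2 ≤ k + 3 by omega)
    unfold G
    split
    · exact mul_mem (mul_mem (eB_mem_sigmaClosure m _) (hle (oB_mem_sigmaClosure m _))) hG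
    · exact mul_mem (mul_mem (oB_mem_sigmaClosure m _) (hle (eB_mem_sigmaClosure m _))) hG

lemma Commute.of_mem_sigmaClosure {m k : ℕ} {x y : BraidGroup m}
    (hx : ∀ i < k, Commute x (σ m i)) (hy : y ∈ sigmaClosure m k) : Commute x y := by
  induction hy using Submonoid.closure_induction with
  | mem _ h => obtain ⟨i, hi, rfl⟩ := h; exact hx i hi
  | one => exact Commute.one_right x
  | mul _ _ _ _ h₁ h₂ => exact h₁.mul_right h₂

def eo (m n : ℕ) : BraidGroup m :=
  if n % 2 = 1 then eB m n * oB m n else oB m n * eB m n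

lemma eo_mem_sigmaClosure (m n : ℕ) : eo m n ∈ sigmaClosure m n := by
  unfold eo
  split
  · exact mul_mem (eB_mem_sigmaClosure m n) (oB_mem_sigmaClosure m n)
  · exact mul_mem (oB_mem_sigmaClosure m n) (eB_mem_sigmaClosure m n)

lemma G_add_two (m k : ℕ) : G m (k + 2) = eo m (k + 2) * G m k := by
  rw [G, eo]
  split_ifs with h
  · rw [eB_succ_of_odd h]
  · rw [oB_succ_of_even (by omega)]

lemma eo_add_four (m k : ℕ) : eo m (k + 4) = eo m (k + 2) * (σ m (k + 3) * σ m (k + 2)) := by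
  have hσ : ∀ y ∈ sigmaClosure m (k + 2), Commute (σ m (k + 3)) y :=
    fun _ => Commute.of_mem_sigmaClosure fun i hi => (σ_commute m (by omega)).symm
  unfold eo
  rcases Nat.mod_two_eq_zero_or_one k with hk | hk
  · rw [if_neg (by omega), if_neg (by omega), oB_succ_of_odd (by omega : (k + 3) % 2 = 1),
      oB_succ_of_even (by omega : (k + 2) % 2 = 0), eB_succ_of_odd (by omega : (k + 3) % 2 = 1),
      eB_succ_of_even (by omega : (k + 2) % 2 = 0)]
    simp only [mul_assoc, (hσ _ (eB_mem_sigmaClosure m _)).left_comm]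
  · rw [if_pos (by omega), if_pos (by omega), eB_succ_of_even (by omega : (k + 3) % 2 = 0),
      eB_succ_of_odd (by omega : (k + 2) % 2 = 1), oB_succ_of_even (by omega : (k + 3) % 2 = 0),
      oB_succ_of_odd (by omega : (k + 2) % 2 = 1)]
    simp only [mul_assoc, (hσ _ (oB_mem_sigmaClosure m _)).left_comm]

lemma eo_mul_G (m : ℕ) : ∀ k, eo m (k + 2) * G m k = G m k * W m (k + 2)
  | 0 => by simp [eo, eB, oB, G, W, List.range_succ, σ_zero]
  | 1 => by simp [eo, eB, oB, G, W, List.range_succ, σ_zero]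
  | k + 2 => by
    have hσ : Commute (σ m (k + 3) * σ m (k + 2)) (G m k) :=
      Commute.of_mem_sigmaClosure (fun i hi => (σ_commute m (by omega)).symm.mul_left
        (σ_commute m (by omega)).symm) (G_mem_sigmaClosure m k)
    calc eo m (k + 4) * G m (k + 2)
        = eo m (k + 2) * (σ m (k + 3) * σ m (k + 2)) * (eo m (k + 2) * G m k) := by
          rw [eo_add_four, G_add_two, mul_assoc]
      _ = eo m (k + 2) * (σ m (k + 3) * σ m (k + 2)) * (G m k * W m (k + 2)) := by
          rw [eo_mul_G m k]
      _ = eo m (k + 2) * G m k * (σ m (k + 3) * σ m (k + 2) * W m (k + 2)) := by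
          rw [mul_assoc, ← mul_assoc _ (G m k), hσ.eq, mul_assoc, mul_assoc, mul_assoc]
      _ = G m (k + 2) * W m (k + 4) := by
          rw [G_add_two, mul_assoc (σ m _)]
          rfl

lemma conj_inv_mul_eq {M : Type*} [Group M] {h g x w : M} (hx : Commute h x)
    (hg : x * g = g * w) : (h⁻¹ * g)⁻¹ * x * (h⁻¹ * g) = w := by
  calc (h⁻¹ * g)⁻¹ * x * (h⁻¹ * g) = g⁻¹ * (h * x * h⁻¹) * g := by group
    _ = w := by rw [hx.mul_inv_cancel, mul_assoc, hg, inv_mul_cancel_left]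

lemma commute_apply_of_mem_closure {M : Type*} [Monoid M] {f : M → M}
    (hmul : ∀ x y, f (x * y) = f y * f x) (hone : f 1 = 1) {s : Set M} {y x : M}
    (hs : ∀ a ∈ s, Commute y (f a)) (hx : x ∈ Submonoid.closure s) : Commute y (f x) := by
  induction hx using Submonoid.closure_induction with
  | mem a ha => exact hs a ha
  | one => rw [hone]; exact Commute.one_right y
  | mul _ _ _ _ h₁ h₂ => rw [hmul]; exact h₂.mul_right h₁

theorem conj_eo_low_by_Omega_general (a₁ a₂ : ℕ) (h1 : 2 ≤ a₁)
    (ρ : BraidGroup a₂ → BraidGroup a₂)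
    (hmul : ∀ x y, ρ (x * y) = ρ y * ρ x) (hone : ρ 1 = 1)
    (hσ : ∀ i, 1 ≤ i → i ≤ a₂ - 1 → ρ (σ a₂ i) = σ a₂ (a₂ - i)) :
    (Odd a₁ →
      ((ρ (G a₂ (a₂ - a₁ - 1)))⁻¹ * G a₂ (a₁ - 2))⁻¹ * (eB a₂ a₁ * oB a₂ a₁) *
        ((ρ (G a₂ (a₂ - a₁ - 1)))⁻¹ * G a₂ (a₁ - 2)) = W a₂ a₁) ∧
    (Even a₁ →
      ((ρ (G a₂ (a₂ - a₁ - 1)))⁻¹ * G a₂ (a₁ - 2))⁻¹ * (oB a₂ a₁ * eB a₂ a₁) *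
        ((ρ (G a₂ (a₂ - a₁ - 1)))⁻¹ * G a₂ (a₁ - 2)) = W a₂ a₁) := by
  obtain ⟨k, rfl⟩ : ∃ k, a₁ = k + 2 := ⟨a₁ - 2, by omega⟩
  set N := a₂ - (k + 2) - 1
  have hρσ : ∀ j < k + 2, ∀ a ∈ σ a₂ '' Set.Iio (N + 1), Commute (σ a₂ j) (ρ a) := by
    rintro j hj _ ⟨i, hi : i < N + 1, rfl⟩
    rcases Nat.eq_zero_or_pos i with rfl | hi₀
    · rw [σ_zero, hone]
      exact Commute.one_right _
    · rw [hσ i hi₀ (by omega)]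
      exact σ_commute a₂ (by omega)
  have hH : Commute (ρ (G a₂ N)) (eo a₂ (k + 2)) :=
    Commute.of_mem_sigmaClosure (fun j hj =>
      (commute_apply_of_mem_closure hmul hone (hρσ j hj) (G_mem_sigmaClosure a₂ N)).symm)
      (eo_mem_sigmaClosure a₂ (k + 2))
  have hΩ := conj_inv_mul_eq hH (eo_mul_G a₂ k)
  rw [Nat.add_sub_cancel]
  refine ⟨fun hodd => ?_, fun heven => ?_⟩
  · rwa [eo, if_pos (Nat.odd_iff.mp hodd)] at hΩ
  · rwa [eo, if_neg (by rw [Nat.even_iff.mp heven]; decide)] at hΩ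

/-- For `2 ≤ a₁ < a₂`, with `H(a₁,a₂) := ρ(G(a₂ - a₁ - 1))` and
`Ω(a₁,a₂) := H(a₁,a₂)⁻¹ G(a₁ - 2)` in `B_{a₂}`: if `a₁` is odd then
`Ω⁻¹ e(a₁) o(a₁) Ω = W(a₁)`, and if `a₁` is even then `Ω⁻¹ o(a₁) e(a₁) Ω = W(a₁)`. -/
theorem conj_eo_low_by_Omega (a₁ a₂ : ℕ) (h1 : 2 ≤ a₁) (h12 : a₁ < a₂)
    (ρ : BraidGroup a₂ → BraidGroup a₂)
    (hmul : ∀ x y, ρ (x * y) = ρ y * ρ x) (hone : ρ 1 = 1)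
    (hσ : ∀ i, 1 ≤ i → i ≤ a₂ - 1 → ρ (σ a₂ i) = σ a₂ (a₂ - i)) :
    (Odd a₁ →
      ((ρ (G a₂ (a₂ - a₁ - 1)))⁻¹ * G a₂ (a₁ - 2))⁻¹ * (eB a₂ a₁ * oB a₂ a₁) *
        ((ρ (G a₂ (a₂ - a₁ - 1)))⁻¹ * G a₂ (a₁ - 2)) = W a₂ a₁) ∧
    (Even a₁ →
      ((ρ (G a₂ (a₂ - a₁ - 1)))⁻¹ * G a₂ (a₁ - 2))⁻¹ * (oB a₂ a₁ * eB a₂ a₁) *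
        ((ρ (G a₂ (a₂ - a₁ - 1)))⁻¹ * G a₂ (a₁ - 2)) = W a₂ a₁) :=
  conj_eo_low_by_Omega_general a₁ a₂ h1 ρ hmul hone hσ
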